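/- arXiv:2512.19079 — 4 statements merged into one kernel-verified Lean document; each statement's English description precedes it below -/
import Mathlib

section
/- Let H be a real inner product space and δ > 0. Suppose μ : [0,∞) → ℝ is continuously differentiable, nonnegative, and satisfies μ'(s) + δ μ(s) ≤ 0 for all s ≥ 0. Suppose η : [0,∞) → H is differentiable with η(0) = 0 and μ(s)‖η(s)‖² → 0 as s → ∞, and the functions s ↦ μ(s)‖η(s)‖², s ↦ μ'(s)‖η(s)‖² and s ↦ μ(s)⟨η(s), η'(s)⟩ are Lebesgue integrable on [0,∞). Then ∫₀^∞ μ(s)⟨η(s), η'(s)⟩ ds ≥ (δ/2) ∫₀^∞ μ(s)‖η(s)‖² ds. -/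
open MeasureTheory
open scoped RealInnerProductSpace

/-- Memory dissipation inequality (3.8)–(3.9): if the kernel `μ` is `C¹`,
nonnegative and satisfies `μ' + δ μ ≤ 0` on `[0,∞)`, and the history `η` is
differentiable with `η 0 = 0` and `μ(s)‖η(s)‖² → 0` as `s → ∞`, with the
relevant integrands integrable, then
`∫₀^∞ μ(s)⟪η(s), η'(s)⟫ ds ≥ (δ/2) ∫₀^∞ μ(s)‖η(s)‖² ds`. -/
theorem stmt_1
    {H : Type*} [NormedAddCommGroup H] [InnerProductSpace ℝ H]
    (δ : ℝ) (hδ : 0 < δ)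
    (μ μ' : ℝ → ℝ) (η η' : ℝ → H)
    (hμ_deriv : ∀ s ∈ Set.Ici (0:ℝ), HasDerivAt μ (μ' s) s)
    (hμ'_cont : ContinuousOn μ' (Set.Ici 0))
    (hμ_nonneg : ∀ s ∈ Set.Ici (0:ℝ), 0 ≤ μ s)
    (hμδ : ∀ s ∈ Set.Ici (0:ℝ), μ' s + δ * μ s ≤ 0)
    (hη_deriv : ∀ s, HasDerivAt η (η' s) s)
    (hη0 : η 0 = 0)
    (hlim : Filter.Tendsto (fun s => μ s * ‖η s‖ ^ 2) Filter.atTop (nhds 0))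
    (hint1 : IntegrableOn (fun s => μ s * ‖η s‖ ^ 2) (Set.Ioi 0))
    (hint2 : IntegrableOn (fun s => μ' s * ‖η s‖ ^ 2) (Set.Ioi 0))
    (hint3 : IntegrableOn (fun s => μ s * ⟪η s, η' s⟫) (Set.Ioi 0)) :
    (δ / 2) * (∫ s in Set.Ioi (0:ℝ), μ s * ‖η s‖ ^ 2) ≤
      ∫ s in Set.Ioi (0:ℝ), μ s * ⟪η s, η' s⟫ := by
  -- derivative of F s = μ s * ‖η s‖²
  have hNsq : ∀ s, HasDerivAt (fun s => ‖η s‖ ^ 2) (2 * ⟪η s, η' s⟫) s := by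
    intro s
    have h := (hη_deriv s).inner ℝ (hη_deriv s)
    have : (fun s => ⟪η s, η s⟫) = fun s => ‖η s‖ ^ 2 := by
      funext t; rw [real_inner_self_eq_norm_sq]
    rw [this] at h
    have e : 2 * ⟪η s, η' s⟫ = ⟪η s, η' s⟫ + ⟪η' s, η s⟫ := by
      rw [real_inner_comm (η' s) (η s)]; ring
    rw [e]; exact h
  have hF : ∀ s ∈ Set.Ici (0:ℝ),
      HasDerivAt (fun s => μ s * ‖η s‖ ^ 2)
        (μ' s * ‖η s‖ ^ 2 + 2 * (μ s * ⟪η s, η' s⟫)) s := by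
    intro s hs
    have := (hμ_deriv s hs).mul (hNsq s)
    have e : μ' s * ‖η s‖ ^ 2 + 2 * (μ s * ⟪η s, η' s⟫)
        = μ' s * ‖η s‖ ^ 2 + μ s * (2 * ⟪η s, η' s⟫) := by ring
    rw [e]; exact this
  have hFint : IntegrableOn
      (fun s => μ' s * ‖η s‖ ^ 2 + 2 * (μ s * ⟪η s, η' s⟫)) (Set.Ioi 0) :=
    hint2.add (hint3.const_mul 2)
  have hFTC := integral_Ioi_of_hasDerivAt_of_tendsto' hF hFint hlim
  rw [hη0] at hFTC
  simp only [norm_zero, mul_zero, zero_pow, sub_zero, zero_sub, neg_zero] at hFTC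
  have hsplit : (∫ s in Set.Ioi (0:ℝ), μ' s * ‖η s‖ ^ 2)
      + 2 * ∫ s in Set.Ioi (0:ℝ), μ s * ⟪η s, η' s⟫ = 0 := by
    rw [← integral_const_mul, ← integral_add hint2 (hint3.const_mul 2)]
    simpa using hFTC
  -- pointwise: δ * (μ s * ‖η s‖²) ≤ -(μ' s * ‖η s‖²)
  have hmono : δ * (∫ s in Set.Ioi (0:ℝ), μ s * ‖η s‖ ^ 2)
      ≤ ∫ s in Set.Ioi (0:ℝ), -(μ' s * ‖η s‖ ^ 2) := by
    rw [← integral_const_mul]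
    apply setIntegral_mono_on (hint1.const_mul δ) hint2.neg measurableSet_Ioi
    intro s hs
    have hs' : s ∈ Set.Ici (0:ℝ) := Set.mem_Ici.mpr (le_of_lt hs)
    have h1 := hμδ s hs'
    have h2 : (0:ℝ) ≤ ‖η s‖ ^ 2 := sq_nonneg _
    show δ * (μ s * ‖η s‖ ^ 2) ≤ -(μ' s * ‖η s‖ ^ 2)
    nlinarith
  rw [integral_neg] at hmono
  linarith [hmono, hsplit]
end

section
/- Let E be a Banach space, Σ a nonempty set, and T : [0,∞) × Σ → Σ a translation semigroup (T(0) = id and T(s+r) = T(s)∘T(r)). Let {U_σ(t,τ) : t ≥ τ ≥ 0, σ ∈ Σ} be a family of processes on E (U_σ(t,s)∘U_σ(s,τ) = U_σ(t,τ) for t ≥ s ≥ τ, and U_σ(τ,τ) = id) satisfying the translation identity U_σ(t+s, τ+s) = U_{T(s)σ}(t,τ) for all σ ∈ Σ, t ≥ τ ≥ 0, s ≥ 0. Suppose B₀ ⊆ E is a bounded uniformly (w.r.t. σ ∈ Σ) absorbing set, i.e. for every τ ≥ 0 and every bounded B ⊆ E there is T₀ ≥ τ such that ⋃_{σ∈Σ}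 U_σ(t,τ)B ⊆ B₀ for all t ≥ T₀. Assume that for every ε > 0 there exist T* > 0 and a contractive function φ on B₀ × B₀ such that ‖U_{σ₁}(T*,0)x − U_{σ₂}(T*,0)y‖ ≤ ε + φ(x, y; σ₁, σ₂) for all x, y ∈ B₀ and σ₁, σ₂ ∈ Σ. Then the family {U_σ(t,τ)} is uniformly (w.r.t. σ ∈ Σ) asymptotically compact: for each τ ≥ 0, each sequence t_n ≥ τ with t_n → ∞, each bounded sequence {x_n} ⊂ E and each sequence {σ_n} ⊂ Σ, the sequence {U_{σ_n}(t_n, τ)x_n} has a convergent subsequence in E. -/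
open Filter

private lemma diag_cauchy {X : Type*} [PseudoMetricSpace X] (y : ℕ → X)
    (h : ∀ ε > (0:ℝ), ∀ f : ℕ → ℕ, StrictMono f →
      ∃ g : ℕ → ℕ, StrictMono g ∧ ∀ k l, dist (y (f (g k))) (y (f (g l))) ≤ ε) :
    ∃ f : ℕ → ℕ, StrictMono f ∧ CauchySeq (y ∘ f) := by
  classical
  have hG : ∀ (n : ℕ) (f : ℕ → ℕ), StrictMono f →
      ∃ g : ℕ → ℕ, StrictMono g ∧ ∀ k l,
        dist (y (f (g k))) (y (f (g l))) ≤ 1/((n:ℝ)+1) := by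
    intro n f hf
    exact h (1/((n:ℝ)+1)) (by positivity) f hf
  let G : ℕ → (ℕ → ℕ) → (ℕ → ℕ) := fun n f =>
    if hf : StrictMono f then (hG n f hf).choose else id
  have hGmono : ∀ n f (hf : StrictMono f), StrictMono (G n f) := by
    intro n f hf
    simp only [G, dif_pos hf]
    exact (hG n f hf).choose_spec.1
  have hGb : ∀ n f (hf : StrictMono f), ∀ k l,
      dist (y (f (G n f k))) (y (f (G n f l))) ≤ 1/((n:ℝ)+1) := by
    intro n f hf k l
    simp only [G, dif_pos hf]
    exact (hG n f hf).choose_spec.2 k l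
  let F : ℕ → ℕ → ℕ := fun n => Nat.rec (G 0 id) (fun k prev => prev ∘ G (k+1) prev) n
  have hF0 : F 0 = G 0 id := rfl
  have hFs : ∀ n, F (n+1) = F n ∘ G (n+1) (F n) := fun n => rfl
  have hFmono : ∀ n, StrictMono (F n) := by
    intro n
    induction n with
    | zero => exact hGmono 0 id strictMono_id
    | succ k ih => exact ih.comp (hGmono (k+1) (F k) ih)
  have hFb : ∀ n k l, dist (y (F n k)) (y (F n l)) ≤ 1/((n:ℝ)+1) := by
    intro n
    induction n with
    | zero => intro k l; exact hGb 0 id strictMono_id k l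
    | succ p ih =>
      intro k l
      have := hGb (p+1) (F p) (hFmono p) k l
      push_cast at this ⊢
      convert this using 3 <;> rfl
  have hfactor : ∀ N n, N ≤ n → ∀ k, ∃ j, F n k = F N j := by
    intro N n hNn
    induction n, hNn using Nat.le_induction with
    | base => exact fun k => ⟨k, rfl⟩
    | succ p hp ih =>
      intro k
      obtain ⟨j, hj⟩ := ih (G (p+1) (F p) k)
      exact ⟨j, hj⟩
  refine ⟨fun n => F n n, ?_, ?_⟩
  · apply strictMono_nat_of_lt_succ
    intro n
    have h1 : n + 1 ≤ G (n+1) (F n) (n+1) := (hGmono (n+1) (F n) (hFmono n)).le_apply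
    calc F n n < F n (n+1) := hFmono n (Nat.lt_succ_self n)
      _ ≤ F n (G (n+1) (F n) (n+1)) := (hFmono n).monotone h1
      _ = F (n+1) (n+1) := rfl
  · refine cauchySeq_of_le_tendsto_0 (fun N => 1/((N:ℝ)+1)) ?_ ?_
    · intro n m N hNn hNm
      obtain ⟨j1, hj1⟩ := hfactor N n hNn n
      obtain ⟨j2, hj2⟩ := hfactor N m hNm m
      simp only [Function.comp_apply, hj1, hj2]
      exact hFb N j1 j2
    · exact tendsto_one_div_add_atTop_nhds_zero_nat


/-- Lemma 2.6: criterion for uniform asymptotic compactness via contractive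
functions. If a family of processes `U` on a Banach space `E`, with symbol
space `Λ` and translation semigroup `T`, satisfies the translation identity,
has a bounded uniformly absorbing set `B₀`, and for every `ε > 0` admits a
time `T* > 0` and a contractive function `φ` on `B₀ × B₀` with
`‖U_{σ₁}(T*,0)x − U_{σ₂}(T*,0)y‖ ≤ ε + φ(x,y;σ₁,σ₂)`, then the family is
uniformly (w.r.t. `σ ∈ Λ`) asymptotically compact. -/
theorem stmt_6
    {E : Type*} [NormedAddCommGroup E] [NormedSpace ℝ E] [CompleteSpace E]
    {Λ : Type*} [Nonempty Λ]
    (T : ℝ → Λ → Λ)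
    (hT0 : ∀ σ, T 0 σ = σ)
    (hTadd : ∀ s r : ℝ, 0 ≤ s → 0 ≤ r → ∀ σ, T (s + r) σ = T s (T r σ))
    (U : Λ → ℝ → ℝ → E → E)
    (hUid : ∀ σ, ∀ τ : ℝ, 0 ≤ τ → ∀ x, U σ τ τ x = x)
    (hUcomp : ∀ σ, ∀ t s τ : ℝ, 0 ≤ τ → τ ≤ s → s ≤ t → ∀ x,
      U σ t s (U σ s τ x) = U σ t τ x)
    (hTrans : ∀ σ, ∀ t τ s : ℝ, 0 ≤ τ → τ ≤ t → 0 ≤ s → ∀ x,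
      U σ (t + s) (τ + s) x = U (T s σ) t τ x)
    (B₀ : Set E)
    (hB₀bdd : Bornology.IsBounded B₀)
    (habs : ∀ τ : ℝ, 0 ≤ τ → ∀ B : Set E, Bornology.IsBounded B →
      ∃ T₀ : ℝ, τ ≤ T₀ ∧ ∀ t ≥ T₀, ∀ σ : Λ, U σ t τ '' B ⊆ B₀)
    (hcontr : ∀ ε > (0:ℝ), ∃ Tstar > (0:ℝ), ∃ φ : E → E → Λ → Λ → ℝ,
      (∀ (x : ℕ → E) (σ : ℕ → Λ), (∀ n, x n ∈ B₀) →
        ∃ n : ℕ → ℕ, StrictMono n ∧ ∃ L : ℕ → ℝ,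
          (∀ k, Tendsto (fun l => φ (x (n k)) (x (n l)) (σ (n k)) (σ (n l)))
            atTop (nhds (L k))) ∧
          Tendsto L atTop (nhds 0)) ∧
      (∀ x ∈ B₀, ∀ y ∈ B₀, ∀ σ₁ σ₂ : Λ,
        ‖U σ₁ Tstar 0 x - U σ₂ Tstar 0 y‖ ≤ ε + φ x y σ₁ σ₂)) :
    ∀ τ : ℝ, 0 ≤ τ → ∀ t : ℕ → ℝ, (∀ n, τ ≤ t n) → Tendsto t atTop atTop →
      ∀ x : ℕ → E, Bornology.IsBounded (Set.range x) → ∀ σ : ℕ → Λ,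
        ∃ (n : ℕ → ℕ) (y : E), StrictMono n ∧
          Tendsto (fun k => U (σ (n k)) (t (n k)) τ (x (n k))) atTop (nhds y) := by
  intro τ hτ t ht httop x hx σ
  classical
  set y : ℕ → E := fun n => U (σ n) (t n) τ (x n) with hy
  obtain ⟨T₀, hT₀τ, hT₀⟩ := habs τ hτ (Set.range x) hx
  have key : ∀ ε > (0:ℝ), ∀ f : ℕ → ℕ, StrictMono f →
      ∃ g : ℕ → ℕ, StrictMono g ∧ ∀ k l, dist (y (f (g k))) (y (f (g l))) ≤ ε := by
    intro ε hε f hf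
    obtain ⟨Tstar, hTstar, φ, hφ1, hφ2⟩ := hcontr (ε/2) (by linarith)
    have hev : ∀ᶠ n in atTop, T₀ + Tstar ≤ t (f n) :=
      (httop.comp hf.tendsto_atTop).eventually_ge_atTop (T₀ + Tstar)
    obtain ⟨N, hN⟩ := eventually_atTop.mp hev
    set s : ℕ → ℝ := fun n => t (f (n + N)) - Tstar with hs
    have hsT₀ : ∀ n, T₀ ≤ s n := by
      intro n
      have := hN (n + N) (Nat.le_add_left N n)
      simp only [hs]
      linarith
    have hsτ : ∀ n, τ ≤ s n := fun n => le_trans hT₀τ (hsT₀ n)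
    have hs0 : ∀ n, 0 ≤ s n := fun n => le_trans hτ (hsτ n)
    set z : ℕ → E := fun n => U (σ (f (n+N))) (s n) τ (x (f (n+N))) with hz
    set Sg : ℕ → Λ := fun n => T (s n) (σ (f (n+N))) with hSg
    have hzB : ∀ n, z n ∈ B₀ := fun n =>
      hT₀ (s n) (hsT₀ n) (σ (f (n+N))) ⟨x (f (n+N)), Set.mem_range_self _, rfl⟩
    have hrep : ∀ n, y (f (n+N)) = U (Sg n) Tstar 0 (z n) := by
      intro n
      have h1 := hTrans (σ (f (n+N))) Tstar 0 (s n) le_rfl hTstar.le (hs0 n) (z n)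
      have h2 := hUcomp (σ (f (n+N))) (t (f (n+N))) (s n) τ hτ (hsτ n)
        (by simp only [hs]; linarith) (x (f (n+N)))
      have e1 : Tstar + s n = t (f (n+N)) := by simp only [hs]; ring
      calc y (f (n+N)) = U (σ (f (n+N))) (t (f (n+N))) (s n) (z n) := h2.symm
        _ = U (σ (f (n+N))) (Tstar + s n) (0 + s n) (z n) := by rw [e1, zero_add]
        _ = U (Sg n) Tstar 0 (z n) := h1
    obtain ⟨n', hn', L, hL1, hL2⟩ := hφ1 z Sg hzB
    have hevk : ∀ᶠ k in atTop, L k < ε/4 := hL2.eventually_lt_const (by linarith)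
    obtain ⟨k₀, hk₀⟩ := eventually_atTop.mp hevk
    have hl0ex : ∀ k, ∃ l0 : ℕ, k₀ ≤ k → ∀ l, l0 ≤ l →
        φ (z (n' k)) (z (n' l)) (Sg (n' k)) (Sg (n' l)) ≤ ε/2 := by
      intro k
      by_cases hk : k₀ ≤ k
      · have hevl : ∀ᶠ l in atTop,
            φ (z (n' k)) (z (n' l)) (Sg (n' k)) (Sg (n' l)) < ε/2 :=
          (hL1 k).eventually_lt_const (by linarith [hk₀ k hk])
        obtain ⟨l0, hl0⟩ := eventually_atTop.mp hevl
        exact ⟨l0, fun _ l hl => (hl0 l hl).le⟩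
      · exact ⟨0, fun h => absurd h hk⟩
    choose l0 hl0 using hl0ex
    set Ls : ℕ → ℕ := fun k => (Finset.range (k+1)).sup l0 with hLs'
    have hLs : ∀ i k, i ≤ k → l0 i ≤ Ls k := fun i k hik =>
      Finset.le_sup (Finset.mem_range.mpr (Nat.lt_succ_of_le hik))
    set m : ℕ → ℕ := fun j => Nat.rec k₀ (fun _ prev => max (prev + 1) (Ls prev)) j with hm'
    have hm0 : m 0 = k₀ := rfl
    have hms : ∀ j, m (j+1) = max (m j + 1) (Ls (m j)) := fun j => rfl
    have hmmono : StrictMono m := strictMono_nat_of_lt_succ (fun j => by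
      rw [hms j]; exact lt_of_lt_of_le (Nat.lt_succ_self _) (le_max_left _ _))
    have hmk₀ : ∀ j, k₀ ≤ m j := fun j => hm0 ▸ hmmono.monotone (Nat.zero_le j)
    have hml : ∀ i j, i < j → l0 (m i) ≤ m j := by
      intro i j hij
      calc l0 (m i) ≤ Ls (m i) := hLs _ _ le_rfl
        _ ≤ m (i+1) := by rw [hms i]; exact le_max_right _ _
        _ ≤ m j := hmmono.monotone (Nat.succ_le_of_lt hij)
    have haux : ∀ i j, i < j →
        dist (y (f (n' (m i) + N))) (y (f (n' (m j) + N))) ≤ ε := by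
      intro i j hij
      rw [hrep (n' (m i)), hrep (n' (m j)), dist_eq_norm]
      have hb := hφ2 (z (n' (m i))) (hzB _) (z (n' (m j))) (hzB _)
        (Sg (n' (m i))) (Sg (n' (m j)))
      have hφb := hl0 (m i) (hmk₀ i) (m j) (hml i j hij)
      linarith
    refine ⟨fun j => n' (m j) + N, ?_, ?_⟩
    · exact fun a b hab => Nat.add_lt_add_right ((hn'.comp hmmono) hab) N
    · intro k l
      rcases lt_trichotomy k l with hkl | hkl | hkl
      · exact haux k l hkl
      · subst hkl; simp [dist_self, hε.le]
      · rw [dist_comm]; exact haux l k hkl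
  obtain ⟨g, hg, hcauchy⟩ := diag_cauchy y key
  obtain ⟨p, hp⟩ := cauchySeq_tendsto_of_complete hcauchy
  exact ⟨g, p, hg, hp⟩
end

section
/- Let E be a complete metric space, Σ a nonempty set, T : [0,∞) × Σ → Σ a translation semigroup (T(0) = id, T(s+r) = T(s)∘T(r)), and {U_σ(t,τ) : t ≥ τ, σ ∈ Σ} a family of processes on E (U_σ(t,s)∘U_σ(s,τ) = U_σ(t,τ) for t ≥ s ≥ τ, U_σ(τ,τ) = id) satisfying the translation identity U_σ(t+s, τ+s) = U_{T(s)σ}(t,τ). Then the family {U_σ(t,τ)} has a compact uniform (w.r.t. σ ∈ Σ) attractor A_Σ in E satisfying A_Σ = ω_{0,Σ}(B₀) = ω_{τ,Σ}(B₀) for all τ ∈ ℝ (where B₀ is any bounded uniformly absorbing set) if and only if (i) {U_σ(t,τ)} has a bounded uniformly (w.r.t. σ ∈ Σ) absorbing set B₀, and (ii) {U_σ(t,τ)} is uniformly (w.r.t. σ ∈ Σ) asymptotically compact. -/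
open Filter

/-- A bounded set `B₀` absorbs, uniformly w.r.t. the symbol `σ ∈ Λ`, all
bounded sets: for every `τ ∈ ℝ` and every bounded `B ⊆ E` there is `T₀ ≥ τ`
with `⋃_{σ∈Λ} U_σ(t,τ)B ⊆ B₀` for all `t ≥ T₀`. -/
def IsUniformlyAbsorbing {E : Type*} [MetricSpace E] {Λ : Type*}
    (U : Λ → ℝ → ℝ → E → E) (B₀ : Set E) : Prop :=
  ∀ τ : ℝ, ∀ B : Set E, Bornology.IsBounded B →
    ∃ T₀ : ℝ, τ ≤ T₀ ∧ ∀ t ≥ T₀, ∀ σ : Λ, U σ t τ '' B ⊆ B₀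

/-- Uniform (w.r.t. `σ ∈ Λ`) asymptotic compactness of a family of
processes. -/
def IsUniformlyAsympCompact {E : Type*} [MetricSpace E] {Λ : Type*}
    (U : Λ → ℝ → ℝ → E → E) : Prop :=
  ∀ τ : ℝ, ∀ t : ℕ → ℝ, (∀ n, τ ≤ t n) → Tendsto t atTop atTop →
    ∀ x : ℕ → E, Bornology.IsBounded (Set.range x) → ∀ σ : ℕ → Λ,
      ∃ (n : ℕ → ℕ) (y : E), StrictMono n ∧
        Tendsto (fun k => U (σ (n k)) (t (n k)) τ (x (n k))) atTop (nhds y)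

/-- Hausdorff semidistance `dist_E(A,B) = sup_{a∈A} inf_{b∈B} d(a,b)`
(valued in `ℝ≥0∞`). -/
noncomputable def hausSemidist {E : Type*} [MetricSpace E] (A B : Set E) : ENNReal :=
  ⨆ a ∈ A, EMetric.infEdist a B

/-- `A` uniformly (w.r.t. `σ ∈ Λ`) attracts all bounded sets. -/
def UniformlyAttracts {E : Type*} [MetricSpace E] {Λ : Type*}
    (U : Λ → ℝ → ℝ → E → E) (A : Set E) : Prop :=
  ∀ B : Set E, Bornology.IsBounded B → ∀ τ : ℝ,
    Tendsto (fun t : ℝ => ⨆ σ : Λ, hausSemidist (U σ t τ '' B) A) atTop (nhds 0)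

/-- `A` is the uniform (w.r.t. `σ ∈ Λ`) attractor: it is closed, uniformly
attracts all bounded sets, and is minimal among closed sets with this
property. -/
def IsUniformAttractor {E : Type*} [MetricSpace E] {Λ : Type*}
    (U : Λ → ℝ → ℝ → E → E) (A : Set E) : Prop :=
  IsClosed A ∧ UniformlyAttracts U A ∧
    ∀ A' : Set E, IsClosed A' → UniformlyAttracts U A' → A ⊆ A'

/-- The uniform (w.r.t. `σ ∈ Λ`) ω-limit set of `B` at initial time `τ`. -/
def uniformOmegaLimit {E : Type*} [MetricSpace E] {Λ : Type*}
    (U : Λ → ℝ → ℝ → E → E) (τ : ℝ) (B : Set E) : Set E :=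
  ⋂ t ∈ Set.Ici τ, closure (⋃ σ : Λ, ⋃ s ∈ Set.Ici t, U σ s τ '' B)

section Aux

open EMetric Metric Bornology Set

variable {E : Type*} [MetricSpace E] {Λ : Type*}

/-- Limits of orbit sequences with times tending to infinity belong to the
uniform ω-limit set. -/
lemma mem_omega_of_seq (U : Λ → ℝ → ℝ → E → E) {τ : ℝ} {B : Set E}
    {σ : ℕ → Λ} {s : ℕ → ℝ} {x : ℕ → E}
    (hx : ∀ k, x k ∈ B) (hs : Tendsto s atTop atTop) {y : E}
    (hconv : Tendsto (fun k => U (σ k) (s k) τ (x k)) atTop (nhds y)) :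
    y ∈ uniformOmegaLimit U τ B := by
  rw [uniformOmegaLimit]
  refine Set.mem_iInter₂.2 fun t ht => ?_
  refine mem_closure_of_tendsto hconv ?_
  filter_upwards [hs.eventually_ge_atTop t] with k hk
  exact Set.mem_iUnion.2 ⟨σ k, Set.mem_iUnion₂.2 ⟨s k, hk, Set.mem_image_of_mem _ (hx k)⟩⟩

/-- From a point of the ω-limit set one can extract approximating orbit
points with arbitrarily large times. -/
lemma omega_seq (U : Λ → ℝ → ℝ → E → E) {τ : ℝ} {B : Set E} {y : E}
    (hy : y ∈ uniformOmegaLimit U τ B) (k : ℕ) (r : ℝ) (hr : τ ≤ r) :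
    ∃ (σ : Λ) (s : ℝ) (x : E), r ≤ s ∧ x ∈ B ∧
      dist (U σ s τ x) y < 1 / ((k : ℝ) + 1) := by
  rw [uniformOmegaLimit] at hy
  have hy' := Set.mem_iInter₂.1 hy r hr
  obtain ⟨b, hb, hdist⟩ := Metric.mem_closure_iff.1 hy' (1 / ((k : ℝ) + 1)) (by positivity)
  obtain ⟨σ, hσ⟩ := Set.mem_iUnion.1 hb
  obtain ⟨s, hs, x, hxB, hxe⟩ := Set.mem_iUnion₂.1 hσ
  exact ⟨σ, s, x, hs, hxB, by rw [hxe, dist_comm]; exact hdist⟩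

/-- Sequential version of `omega_seq`, yielding a sequence of orbit points
converging to `y` with times `s k ≥ k + c` tending to infinity. -/
lemma omega_approx (U : Λ → ℝ → ℝ → E → E) {τ : ℝ} {B : Set E} {y : E}
    (hy : y ∈ uniformOmegaLimit U τ B) (c : ℝ) (hc : τ ≤ c) :
    ∃ (σ : ℕ → Λ) (s : ℕ → ℝ) (x : ℕ → E),
      (∀ k : ℕ, (k : ℝ) + c ≤ s k) ∧ (∀ k : ℕ, x k ∈ B) ∧
      Tendsto s atTop atTop ∧
      Tendsto (fun k => U (σ k) (s k) τ (x k)) atTop (nhds y) := by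
  have h : ∀ k : ℕ, ∃ σ s x, (k : ℝ) + c ≤ s ∧ x ∈ B ∧
      dist (U σ s τ x) y < 1 / ((k : ℝ) + 1) := fun k =>
    omega_seq U hy k ((k : ℝ) + c)
      (by have : (0 : ℝ) ≤ (k : ℝ) := Nat.cast_nonneg k; linarith)
  choose σ s x hs hxB hd using h
  refine ⟨σ, s, x, hs, hxB, ?_, ?_⟩
  · exact tendsto_atTop_mono hs
      (tendsto_atTop_add_const_right _ c tendsto_natCast_atTop_atTop)
  · exact tendsto_iff_dist_tendsto_zero.2
      (squeeze_zero (fun _ => dist_nonneg) (fun k => (hd k).le)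
        tendsto_one_div_add_atTop_nhds_zero_nat)

/-- Each orbit point's distance to `A` is bounded by the uniform Hausdorff
semidistance supremum. -/
lemma infEdist_le_sup (U : Λ → ℝ → ℝ → E → E) {A B : Set E} {τ t : ℝ} {σ : Λ} {x : E}
    (hx : x ∈ B) :
    infEdist (U σ t τ x) A ≤ ⨆ σ' : Λ, hausSemidist (U σ' t τ '' B) A := by
  refine le_trans ?_ (le_iSup _ σ)
  rw [hausSemidist]
  exact le_iSup₂ (f := fun a (_ : a ∈ U σ t τ '' B) => infEdist a A) _
    (Set.mem_image_of_mem _ hx)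

end Aux

/-- Theorem 2.9: a family of processes on a complete metric space satisfying
the translation identity has a compact uniform (w.r.t. `σ ∈ Λ`) attractor `A`
with `A = ω_{τ,Λ}(B₀)` for every bounded uniformly absorbing set `B₀` and
every `τ ∈ ℝ`, if and only if it has a bounded uniformly absorbing set and is
uniformly asymptotically compact. -/
theorem stmt_8
    {E : Type*} [MetricSpace E] [CompleteSpace E]
    {Λ : Type*} [Nonempty Λ]
    (T : ℝ → Λ → Λ)
    (hT0 : ∀ σ, T 0 σ = σ)
    (hTadd : ∀ s r : ℝ, 0 ≤ s → 0 ≤ r → ∀ σ, T (s + r) σ = T s (T r σ))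
    (U : Λ → ℝ → ℝ → E → E)
    (hUid : ∀ σ : Λ, ∀ τ : ℝ, ∀ x : E, U σ τ τ x = x)
    (hUcomp : ∀ σ : Λ, ∀ t s τ : ℝ, τ ≤ s → s ≤ t → ∀ x : E,
      U σ t s (U σ s τ x) = U σ t τ x)
    (hTrans : ∀ σ : Λ, ∀ t τ s : ℝ, τ ≤ t → 0 ≤ s → ∀ x : E,
      U σ (t + s) (τ + s) x = U (T s σ) t τ x) :
    (∃ A : Set E, IsCompact A ∧ IsUniformAttractor U A ∧
      ∀ B₀ : Set E, Bornology.IsBounded B₀ → IsUniformlyAbsorbing U B₀ →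
        ∀ τ : ℝ, A = uniformOmegaLimit U τ B₀) ↔
    ((∃ B₀ : Set E, Bornology.IsBounded B₀ ∧ IsUniformlyAbsorbing U B₀) ∧
      IsUniformlyAsympCompact U) := by
  open EMetric Metric Bornology Set in
  constructor
  · -- Forward direction
    rintro ⟨A, hAcomp, ⟨hAcl, hAattr, hAmin⟩, -⟩
    constructor
    · -- a bounded uniformly absorbing set: the closed 1-thickening of A
      refine ⟨Metric.cthickening 1 A, hAcomp.isBounded.cthickening, ?_⟩
      intro τ B hB
      have h1 := (ENNReal.tendsto_nhds_zero.1 (hAattr B hB τ)) 1 one_pos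
      obtain ⟨T₁, hT₁⟩ := eventually_atTop.1 h1
      refine ⟨max T₁ τ, le_max_right _ _, ?_⟩
      rintro t htT σ z ⟨x, hxB, rfl⟩
      rw [Metric.mem_cthickening_iff, ENNReal.ofReal_one]
      exact le_trans (infEdist_le_sup U hxB) (hT₁ t (le_trans (le_max_left _ _) htT))
    · -- uniform asymptotic compactness
      intro τ t hτt httop x hxb σ
      set z : ℕ → E := fun n => U (σ n) (t n) τ (x n) with hz
      have h0 : Tendsto (fun n => infEdist (z n) A) atTop (nhds 0) := by
        refine tendsto_of_tendsto_of_tendsto_of_le_of_le tendsto_const_nhds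
          ((hAattr (Set.range x) hxb τ).comp httop) (fun n => zero_le) ?_
        exact fun n => infEdist_le_sup U (Set.mem_range_self n)
      have hAne : A.Nonempty := by
        by_contra hne
        rw [Set.not_nonempty_iff_eq_empty] at hne
        obtain ⟨N, hN⟩ := eventually_atTop.1 ((ENNReal.tendsto_nhds_zero.1 h0) 1 one_pos)
        have := hN N le_rfl
        rw [hne, show EMetric.infEdist (z N) ∅ = ⊤ from EMetric.infEdist_empty] at this
        simp at this
      choose a haA hae using fun n => hAcomp.exists_infEdist_eq_edist hAne (z n)
      obtain ⟨w, hwA, φ, hφ, hconv⟩ := hAcomp.tendsto_subseq haA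
      refine ⟨φ, w, hφ, ?_⟩
      have h1 : Tendsto (fun j => edist (z (φ j)) (a (φ j))) atTop (nhds 0) := by
        have := h0.comp hφ.tendsto_atTop
        simpa only [Function.comp_def, EMetric.infEdist, hae] using this
      have h2 : Tendsto (fun j => edist (a (φ j)) w) atTop (nhds 0) := by
        have hc : Tendsto (fun u : E => edist u w) (nhds w) (nhds (edist w w)) :=
          (continuous_id.edist continuous_const).tendsto w
        rw [edist_self] at hc
        exact hc.comp hconv
      have h3 : Tendsto (fun j => edist (z (φ j)) w) atTop (nhds 0) := by
        refine tendsto_of_tendsto_of_tendsto_of_le_of_le tendsto_const_nhds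
          (by simpa using h1.add h2) (fun j => zero_le)
          (fun j => edist_triangle _ _ _)
      rw [EMetric.tendsto_nhds]
      intro ε hε
      exact h3.eventually (gt_mem_nhds hε)
  · -- Reverse direction: construct the attractor as ω_{0,Λ}(B₀)
    rintro ⟨⟨B₀, hB₀b, hB₀a⟩, hAC⟩
    set A : Set E := uniformOmegaLimit U 0 B₀ with hA
    have hAcl : IsClosed A := by
      rw [hA, uniformOmegaLimit]
      exact isClosed_biInter fun t _ => isClosed_closure
    -- (b) every uniform ω-limit set of a bounded set is contained in A
    have hsub : ∀ B : Set E, Bornology.IsBounded B → ∀ τ : ℝ,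
        uniformOmegaLimit U τ B ⊆ A := by
      intro B hB τ y hy
      obtain ⟨T₀, hT₀τ, habs⟩ := hB₀a τ B hB
      set s₀ : ℝ := max T₀ 0 with hs₀
      have hs₀τ : τ ≤ s₀ := le_trans hT₀τ (le_max_left _ _)
      have hs₀0 : (0 : ℝ) ≤ s₀ := le_max_right _ _
      obtain ⟨σ, s, x, hs, hxB, hstop, hzy⟩ := omega_approx U hy s₀ hs₀τ
      have hss₀ : ∀ k, s₀ ≤ s k := fun k => by
        have h1 := hs k
        have h2 : (0 : ℝ) ≤ (k : ℝ) := Nat.cast_nonneg k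
        linarith
      have hrw : ∀ k, U (σ k) (s k) τ (x k) =
          U (T s₀ (σ k)) (s k - s₀) 0 (U (σ k) s₀ τ (x k)) := by
        intro k
        have h1 := hTrans (σ k) (s k - s₀) 0 s₀ (by linarith [hss₀ k]) hs₀0
          (U (σ k) s₀ τ (x k))
        rw [show (s k - s₀) + s₀ = s k by ring, zero_add] at h1
        rw [← h1, hUcomp (σ k) (s k) s₀ τ hs₀τ (hss₀ k)]
      refine mem_omega_of_seq U (σ := fun k => T s₀ (σ k)) (s := fun k => s k - s₀)
        (x := fun k => U (σ k) s₀ τ (x k)) ?_ ?_ ?_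
      · exact fun k => habs s₀ (le_max_left _ _) (σ k) (Set.mem_image_of_mem _ (hxB k))
      · refine tendsto_atTop_mono (fun k => ?_)
          tendsto_natCast_atTop_atTop
        have := hs k; linarith
      · exact hzy.congr hrw
    -- (c) A is contained in every ω-limit set of a bounded absorbing set
    have hsup : ∀ B₀' : Set E, IsUniformlyAbsorbing U B₀' → ∀ τ : ℝ,
        A ⊆ uniformOmegaLimit U τ B₀' := by
      intro B₀' hB₀'a τ y hy
      obtain ⟨T₀', hT₀'0, habs'⟩ := hB₀'a 0 B₀ hB₀b
      set m : ℝ := max T₀' τ with hm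
      have hm0 : (0 : ℝ) ≤ m := le_trans hT₀'0 (le_max_left _ _)
      have hmτ : τ ≤ m := le_max_right _ _
      have hmT : T₀' ≤ m := le_max_left _ _
      rw [hA] at hy
      obtain ⟨σ, s, x, hs, hxB, hstop, hzy⟩ := omega_approx U hy m hm0
      have hms : ∀ k, m ≤ s k := fun k => by
        have h1 := hs k
        have h2 : (0 : ℝ) ≤ (k : ℝ) := Nat.cast_nonneg k
        linarith
      have hrw : ∀ k, U (σ k) (s k) 0 (x k) =
          U (T (m - τ) (σ k)) (s k - m + τ) τ (U (σ k) m 0 (x k)) := by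
        intro k
        have h1 := hTrans (σ k) (s k - m + τ) τ (m - τ)
          (by linarith [hms k]) (by linarith) (U (σ k) m 0 (x k))
        rw [show (s k - m + τ) + (m - τ) = s k by ring,
          show τ + (m - τ) = m by ring] at h1
        rw [← h1, hUcomp (σ k) (s k) m 0 hm0 (hms k)]
      refine mem_omega_of_seq U (σ := fun k => T (m - τ) (σ k))
        (s := fun k => s k - m + τ) (x := fun k => U (σ k) m 0 (x k)) ?_ ?_ ?_
      · exact fun k => habs' m hmT (σ k) (Set.mem_image_of_mem _ (hxB k))
      · refine tendsto_atTop_mono (fun k => ?_)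
          (tendsto_atTop_add_const_right _ τ tendsto_natCast_atTop_atTop)
        have := hs k; linarith
      · exact hzy.congr hrw
    -- (d) A is compact
    have hAcomp : IsCompact A := by
      refine IsSeqCompact.isCompact ?_
      intro y hy
      have h : ∀ k : ℕ, ∃ σ s x, (k : ℝ) ≤ s ∧ x ∈ B₀ ∧
          dist (U σ s 0 x) (y k) < 1 / ((k : ℝ) + 1) := fun k =>
        omega_seq U (hy k) k (k : ℝ) (Nat.cast_nonneg k)
      choose σ s x hs hxB hd using h
      have hs0 : ∀ k, (0 : ℝ) ≤ s k := fun k => le_trans (Nat.cast_nonneg k) (hs k)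
      have hstop : Tendsto s atTop atTop :=
        tendsto_atTop_mono hs tendsto_natCast_atTop_atTop
      obtain ⟨n, w, hmono, hconv⟩ := hAC 0 s hs0 hstop x
        (hB₀b.subset (Set.range_subset_iff.2 hxB)) σ
      refine ⟨w, ?_, n, hmono, ?_⟩
      · exact mem_omega_of_seq U (σ := fun j => σ (n j)) (s := fun j => s (n j))
          (x := fun j => x (n j)) (fun j => hxB (n j))
          (hstop.comp hmono.tendsto_atTop) hconv
      · rw [show y ∘ n = fun j => y (n j) from rfl, tendsto_iff_dist_tendsto_zero]
        refine squeeze_zero (fun _ => dist_nonneg)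
          (g := fun j : ℕ => 1 / ((j : ℝ) + 1) +
            dist (U (σ (n j)) (s (n j)) 0 (x (n j))) w) (fun j => ?_) ?_
        · have htri := dist_triangle (y (n j)) (U (σ (n j)) (s (n j)) 0 (x (n j))) w
          have hle : dist (y (n j)) (U (σ (n j)) (s (n j)) 0 (x (n j))) ≤
              1 / ((j : ℝ) + 1) := by
            rw [dist_comm]
            refine le_trans (hd (n j)).le ?_
            refine one_div_le_one_div_of_le (by positivity) ?_
            have : (j : ℝ) ≤ (n j : ℝ) := Nat.cast_le.2 hmono.le_apply
            linarith
          linarith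
        · have h2 : Tendsto (fun j => dist (U (σ (n j)) (s (n j)) 0 (x (n j))) w)
              atTop (nhds 0) := tendsto_iff_dist_tendsto_zero.1 hconv
          simpa using tendsto_one_div_add_atTop_nhds_zero_nat.add h2
    -- (e) A uniformly attracts bounded sets
    have hattr : UniformlyAttracts U A := by
      intro B hB τ
      rw [ENNReal.tendsto_nhds_zero]
      intro ε hε
      by_contra hcon
      rw [not_eventually] at hcon
      have hfreq := frequently_atTop.1 hcon
      have hch : ∀ k : ℕ, ∃ t : ℝ, max (k : ℝ) τ ≤ t ∧
          ε < ⨆ σ : Λ, hausSemidist (U σ t τ '' B) A := by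
        intro k
        obtain ⟨t, ht, hgt⟩ := hfreq (max (k : ℝ) τ)
        exact ⟨t, ht, lt_of_not_ge hgt⟩
      choose t ht hgt using hch
      have hch2 : ∀ k, ∃ (σ : Λ) (x : E), x ∈ B ∧
          ε < EMetric.infEdist (U σ (t k) τ x) A := by
        intro k
        obtain ⟨σ, hσ⟩ := lt_iSup_iff.1 (hgt k)
        rw [hausSemidist] at hσ
        obtain ⟨a, hlt⟩ := lt_iSup_iff.1 hσ
        obtain ⟨ha, hlt⟩ := lt_iSup_iff.1 hlt
        obtain ⟨x, hxB, rfl⟩ := ha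
        exact ⟨σ, x, hxB, hlt⟩
      choose σ x hxB hlt using hch2
      have hτt : ∀ k, τ ≤ t k := fun k => le_trans (le_max_right _ _) (ht k)
      have httop : Tendsto t atTop atTop :=
        tendsto_atTop_mono (fun k => le_trans (le_max_left _ _) (ht k))
          tendsto_natCast_atTop_atTop
      obtain ⟨n, w, hmono, hconv⟩ := hAC τ t hτt httop x
        (hB.subset (Set.range_subset_iff.2 hxB)) σ
      have hwA : w ∈ A := hsub B hB τ
        (mem_omega_of_seq U (σ := fun j => σ (n j)) (s := fun j => t (n j))
          (x := fun j => x (n j)) (fun j => hxB (n j))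
          (httop.comp hmono.tendsto_atTop) hconv)
      have h1 : Tendsto (fun j => EMetric.infEdist (U (σ (n j)) (t (n j)) τ (x (n j))) A)
          atTop (nhds (EMetric.infEdist w A)) :=
        (EMetric.continuous_infEdist.tendsto w).comp hconv
      rw [show EMetric.infEdist w A = 0 from EMetric.infEdist_zero_of_mem hwA] at h1
      have h2 : ε ≤ 0 := ge_of_tendsto h1 (Eventually.of_forall fun j => (hlt (n j)).le)
      exact hε.ne' (le_antisymm h2 zero_le)
    -- (f) minimality
    have hmin : ∀ A' : Set E, IsClosed A' → UniformlyAttracts U A' → A ⊆ A' := by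
      intro A' hA'c hA'a y hy
      rw [hA] at hy
      obtain ⟨σ, s, x, hs, hxB, hstop, hzy⟩ := omega_approx U hy 0 le_rfl
      have h1 : Tendsto (fun k => EMetric.infEdist (U (σ k) (s k) 0 (x k)) A')
          atTop (nhds 0) := by
        refine tendsto_of_tendsto_of_tendsto_of_le_of_le tendsto_const_nhds
          ((hA'a B₀ hB₀b 0).comp hstop) (fun k => zero_le) ?_
        exact fun k => infEdist_le_sup U (hxB k)
      have h2 : Tendsto (fun k => EMetric.infEdist (U (σ k) (s k) 0 (x k)) A')
          atTop (nhds (EMetric.infEdist y A')) :=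
        (EMetric.continuous_infEdist.tendsto y).comp hzy
      have h3 : EMetric.infEdist y A' = 0 := tendsto_nhds_unique h2 h1
      have := EMetric.mem_closure_iff_infEdist_zero.2 h3
      rwa [hA'c.closure_eq] at this
    exact ⟨A, hAcomp, ⟨hAcl, hattr, hmin⟩,
      fun B₀' hb ha τ => subset_antisymm (hsup B₀' ha τ) (hsub B₀' hb τ)⟩
end

section
/- Let H be a real Hilbert space and let g : ℝ → H be differentiable with ∫_ℝ ‖g(s)‖² ds < ∞ and G := sup_{t∈ℝ} ∫_t^{t+1} ‖g'(s)‖² ds < ∞. Then g is bounded; more precisely, ‖g(t)‖² ≤ 2 ∫_ℝ ‖g(s)‖² ds + G for all t ∈ ℝ, so there is a constant M > 0 with sup_{t∈ℝ} ‖g(t)‖ ≤ M. -/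
open MeasureTheory

/-- Lemma 4.2: if `g : ℝ → H` is differentiable with `∫_ℝ ‖g‖² < ∞` and its
derivative is translation bounded, `sup_{t} ∫_t^{t+1} ‖g'‖² ≤ G`, then `g` is
bounded: `‖g(t)‖² ≤ 2∫_ℝ ‖g‖² + G` for all `t`, and hence
`sup_{t∈ℝ} ‖g(t)‖ ≤ M` for some `M > 0`. -/
theorem stmt_14 {H : Type*} [NormedAddCommGroup H] [InnerProductSpace ℝ H]
    [CompleteSpace H]
    (g g' : ℝ → H) (hderiv : ∀ t : ℝ, HasDerivAt g (g' t) t)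
    (hint : Integrable (fun s : ℝ => ‖g s‖ ^ 2))
    (G : ℝ)
    (hG : ∀ t : ℝ, IntegrableOn (fun s : ℝ => ‖g' s‖ ^ 2) (Set.Ioc t (t + 1)) ∧
      (∫ s in Set.Ioc t (t + 1), ‖g' s‖ ^ 2) ≤ G) :
    (∀ t : ℝ, ‖g t‖ ^ 2 ≤ 2 * (∫ s : ℝ, ‖g s‖ ^ 2) + G) ∧
    ∃ M > (0:ℝ), ∀ t : ℝ, ‖g t‖ ≤ M := by
  set I : ℝ := ∫ s : ℝ, ‖g s‖ ^ 2 with hIdef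
  -- continuity of g
  have hcont : Continuous g := by
    rw [continuous_iff_continuousAt]
    exact fun x => (hderiv x).continuousAt
  -- measurability of g'
  have hg'm : AEStronglyMeasurable g' (volume : Measure ℝ) := by
    have hE : g' = deriv g := funext fun x => ((hderiv x).deriv).symm
    rw [hE]
    exact (stronglyMeasurable_deriv g).aestronglyMeasurable
  -- derivative of ‖g‖²
  set D : ℝ → ℝ := fun s => inner ℝ (g s) (g' s) + inner ℝ (g' s) (g s) with hDdef
  have hφderiv : ∀ s : ℝ, HasDerivAt (fun u => ‖g u‖ ^ 2) (D s) s := by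
    intro s
    have h1 : HasDerivAt (fun u => (inner ℝ (g u) (g u) : ℝ)) (D s) s :=
      (hderiv s).inner ℝ (hderiv s)
    have h2 : (fun u => (inner ℝ (g u) (g u) : ℝ)) = fun u => ‖g u‖ ^ 2 :=
      funext fun u => real_inner_self_eq_norm_sq _
    rwa [h2] at h1
  have hDb : ∀ s : ℝ, |D s| ≤ ‖g s‖ ^ 2 + ‖g' s‖ ^ 2 := by
    intro s
    have h1 : |(inner ℝ (g s) (g' s) : ℝ)| ≤ ‖g s‖ * ‖g' s‖ := abs_real_inner_le_norm _ _
    have h2 : |(inner ℝ (g' s) (g s) : ℝ)| ≤ ‖g' s‖ * ‖g s‖ := abs_real_inner_le_norm _ _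
    have h3 : |D s| ≤ |(inner ℝ (g s) (g' s) : ℝ)| + |(inner ℝ (g' s) (g s) : ℝ)| := abs_add_le _ _
    nlinarith [sq_nonneg (‖g s‖ - ‖g' s‖)]
  have hDm : AEStronglyMeasurable D (volume : Measure ℝ) := by
    exact ((hcont.aestronglyMeasurable).inner hg'm).add (hg'm.inner hcont.aestronglyMeasurable)
  have key : ∀ t : ℝ, ‖g t‖ ^ 2 ≤ 2 * I + G := by
    intro t
    -- the bounding function is integrable on `Ioc (t-1) t`
    have hint' : IntegrableOn (fun s => ‖g s‖ ^ 2 + ‖g' s‖ ^ 2) (Set.Ioc (t - 1) t) := by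
      have h := (hG (t - 1)).1
      rw [sub_add_cancel] at h
      exact hint.integrableOn.add h
    have hDint : IntegrableOn D (Set.Ioc (t - 1) t) := by
      refine Integrable.mono hint' hDm.restrict ?_
      filter_upwards with s
      rw [Real.norm_eq_abs, Real.norm_eq_abs]
      refine (hDb s).trans (le_abs_self _)
    -- pick a point where `‖g‖²` attains its minimum on `[t-1, t]`
    obtain ⟨s₀, hs₀mem, hs₀min⟩ :=
      isCompact_Icc.exists_isMinOn (Set.nonempty_Icc.2 (by linarith : t - 1 ≤ t))
        ((hcont.norm.pow 2).continuousOn : ContinuousOn (fun u => ‖g u‖ ^ 2) (Set.Icc (t-1) t))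
    obtain ⟨hs₀1, hs₀2⟩ := hs₀mem
    -- the minimum value is at most the integral over `Ioc (t-1) t`
    have hvol : (volume (Set.Ioc (t - 1) t)).toReal = 1 := by
      rw [Real.volume_Ioc]
      norm_num
    have hmin_le : ‖g s₀‖ ^ 2 ≤ ∫ s in Set.Ioc (t - 1) t, ‖g s‖ ^ 2 := by
      have h := setIntegral_ge_of_const_le_real (c := ‖g s₀‖ ^ 2)
        (measurableSet_Ioc : MeasurableSet (Set.Ioc (t-1) t))
        (by rw [Real.volume_Ioc]; exact ENNReal.ofReal_ne_top)
        (fun x hx => hs₀min (Set.Ioc_subset_Icc_self hx))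
        hint.integrableOn
      rwa [measureReal_def, hvol, mul_one] at h
    have hIocI : ∫ s in Set.Ioc (t - 1) t, ‖g s‖ ^ 2 ≤ I :=
      setIntegral_le_integral hint (Filter.Eventually.of_forall fun s => by positivity)
    -- fundamental theorem of calculus on `[s₀, t]`
    have hDII : IntervalIntegrable D volume s₀ t := by
      rw [intervalIntegrable_iff_integrableOn_Ioc_of_le hs₀2]
      exact hDint.mono_set (Set.Ioc_subset_Ioc_left hs₀1)
    have hftc : ∫ u in s₀..t, D u = ‖g t‖ ^ 2 - ‖g s₀‖ ^ 2 :=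
      intervalIntegral.integral_eq_sub_of_hasDerivAt (fun u _ => hφderiv u) hDII
    -- bound the integral of D
    have hbig : ∫ u in s₀..t, D u ≤ ∫ s in Set.Ioc (t - 1) t, (‖g s‖ ^ 2 + ‖g' s‖ ^ 2) := by
      rw [intervalIntegral.integral_of_le hs₀2]
      have h1 : ∫ u in Set.Ioc s₀ t, D u ≤ ∫ u in Set.Ioc s₀ t, (‖g u‖ ^ 2 + ‖g' u‖ ^ 2) := by
        refine setIntegral_mono_on (hDint.mono_set (Set.Ioc_subset_Ioc_left hs₀1))
          (hint'.mono_set (Set.Ioc_subset_Ioc_left hs₀1)) measurableSet_Ioc ?_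
        intro u _
        exact le_trans (le_abs_self _) (hDb u)
      have h2 : ∫ u in Set.Ioc s₀ t, (‖g u‖ ^ 2 + ‖g' u‖ ^ 2)
          ≤ ∫ u in Set.Ioc (t - 1) t, (‖g u‖ ^ 2 + ‖g' u‖ ^ 2) := by
        refine setIntegral_mono_set hint'
          (Filter.Eventually.of_forall fun u => by positivity)
          (Filter.Eventually.of_forall (Set.Ioc_subset_Ioc_left hs₀1))
      linarith
    -- split the integral of the bound
    have hsplit : ∫ s in Set.Ioc (t - 1) t, (‖g s‖ ^ 2 + ‖g' s‖ ^ 2)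
        = (∫ s in Set.Ioc (t - 1) t, ‖g s‖ ^ 2) + ∫ s in Set.Ioc (t - 1) t, ‖g' s‖ ^ 2 := by
      have h := (hG (t - 1)).1
      rw [sub_add_cancel] at h
      exact integral_add hint.integrableOn h
    have hg'le : ∫ s in Set.Ioc (t - 1) t, ‖g' s‖ ^ 2 ≤ G := by
      have h := (hG (t - 1)).2
      rwa [sub_add_cancel] at h
    linarith
  refine ⟨key, Real.sqrt (2 * I + G) + 1, by positivity, fun t => ?_⟩
  calc ‖g t‖ = Real.sqrt (‖g t‖ ^ 2) := by rw [Real.sqrt_sq (norm_nonneg _)]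
    _ ≤ Real.sqrt (2 * I + G) := Real.sqrt_le_sqrt (key t)
    _ ≤ Real.sqrt (2 * I + G) + 1 := by linarith
end
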